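/- arXiv:2402.02143 — 4 statements merged into one kernel-verified Lean document; each statement's English description precedes it below -/
import Mathlib

section
/- Let c, p ∈ ℕ with c, p ≥ 2 and p prime. For any finite nilpotent group G₀ of nilpotency class at most c and exponent dividing p, there exists a finite group G₁ in the same class (nilpotent of class at most c, exponent dividing p) with G₀ ≤ G₁ such that for every finite group C nilpotent of class at most c and exponent dividing p containing G₁, and every i ≤ c, one has Γ_i(G₁) ∩ G₀ = Γ_i(C) ∩ G₀. -/
/-! Record, for an embedding `f : G₀ →* G₁`, the tuple of pullbacks `f⁻¹(Γᵢ(G₁))`, `i ≤ c`.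
Composing with a further homomorphism can only enlarge this tuple, and since `G₀` is finite there
are only finitely many tuples, so some embedding into a group of the class has a maximal one;
maximality then forces every further embedding to leave it unchanged. -/

universe u

namespace MonoidHom

variable {G₀ G₁ C : Type*} [Group G₀] [Group G₁] [Group C]

def lowerCentralSeriesComap (f : G₀ →* G₁) (n : ℕ) : Fin (n + 1) → Subgroup G₀ :=
  fun i => ((⊤ : Subgroup G₁).lowerCentralSeries i).comap f

theorem map_top_lowerCentralSeries_le (ι : G₁ →* C) (n : ℕ) :
    ((⊤ : Subgroup G₁).lowerCentralSeries n).map ι ≤ (⊤ : Subgroup C).lowerCentralSeries n := by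
  rw [Subgroup.map_lowerCentralSeries]
  exact Subgroup.lowerCentralSeries_mono n le_top

theorem lowerCentralSeriesComap_le_comp (f : G₀ →* G₁) (ι : G₁ →* C) (n : ℕ) :
    f.lowerCentralSeriesComap n ≤ (ι.comp f).lowerCentralSeriesComap n := fun i => by
  rw [lowerCentralSeriesComap, lowerCentralSeriesComap, ← Subgroup.comap_comap]
  exact Subgroup.comap_mono (Subgroup.map_le_iff_le_comap.mp (map_top_lowerCentralSeries_le ι i))

end MonoidHom

theorem exists_embedding_lowerCentralSeries_comap_stable (P : ∀ (G : Type u) [Group G], Prop)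
    {G₀ : Type u} [Group G₀] [Finite G₀] (h₀ : P G₀) (n : ℕ) :
    ∃ (G₁ : Type u) (_ : Group G₁), P G₁ ∧ ∃ f : G₀ →* G₁, Function.Injective f ∧
      ∀ (C : Type u) (_ : Group C), P C → ∀ ι : G₁ →* C, Function.Injective ι →
        ∀ i ≤ n, ((⊤ : Subgroup G₁).lowerCentralSeries i).comap f =
          ((⊤ : Subgroup C).lowerCentralSeries i).comap (ι.comp f) := by
  let T : Set (Fin (n + 1) → Subgroup G₀) :=
    {t | ∃ (G₁ : Type u) (_ : Group G₁), P G₁ ∧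
      ∃ f : G₀ →* G₁, Function.Injective f ∧ t = f.lowerCentralSeriesComap n}
  have hT : T.Nonempty := ⟨_, G₀, _, h₀, MonoidHom.id G₀, Function.injective_id, rfl⟩
  obtain ⟨_, ⟨G₁, _, hG₁, f, hf, rfl⟩, hmax⟩ := T.toFinite.exists_maximalFor id T hT
  refine ⟨G₁, _, hG₁, f, hf, fun C _ hC ι hι i hi => ?_⟩
  have hle := f.lowerCentralSeriesComap_le_comp ι n
  have heq := le_antisymm hle (hmax ⟨C, _, hC, ι.comp f, hι.comp hf, rfl⟩ hle)
  exact congrFun heq ⟨i, Nat.lt_succ_of_le hi⟩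

theorem exists_good_extension_nilpotent_general (c p : ℕ) (G₀ : Type) [Group G₀] [Finite G₀]
    (hG₀nil : (⊤ : Subgroup G₀).lowerCentralSeries c = ⊥) (hG₀exp : ∀ g : G₀, g ^ p = 1) :
    ∃ (G₁ : Type) (_ : Group G₁) (_ : Finite G₁),
      (⊤ : Subgroup G₁).lowerCentralSeries c = ⊥ ∧ (∀ g : G₁, g ^ p = 1) ∧
      ∃ f : G₀ →* G₁, Function.Injective f ∧
        ∀ (C : Type) (_ : Group C) (_ : Finite C),
          (⊤ : Subgroup C).lowerCentralSeries c = ⊥ → (∀ g : C, g ^ p = 1) →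
          ∀ (ι : G₁ →* C), Function.Injective ι →
            ∀ i ≤ c, ((⊤ : Subgroup G₁).lowerCentralSeries i).comap f =
              ((⊤ : Subgroup C).lowerCentralSeries i).comap (ι.comp f) := by
  obtain ⟨G₁, _, ⟨hfin, hnil, hexp⟩, f, hf, hstable⟩ :=
    exists_embedding_lowerCentralSeries_comap_stable
      (fun G _ => Finite G ∧ (⊤ : Subgroup G).lowerCentralSeries c = ⊥ ∧ ∀ g : G, g ^ p = 1)
      ⟨‹_›, hG₀nil, hG₀exp⟩ c
  exact ⟨G₁, _, hfin, hnil, hexp, f, hf,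
    fun C _ hCfin hCnil hCexp => hstable C _ ⟨hCfin, hCnil, hCexp⟩⟩

/-- Lemma 2.8: for any finite group `G₀` nilpotent of class at most `c` and of exponent
dividing `p`, there is a finite group `G₁` in the same class containing `G₀` such that
for every finite group `C` in the class containing `G₁` and every `i ≤ c`,
`Γᵢ(G₁) ∩ G₀ = Γᵢ(C) ∩ G₀` (intersections computed via the embeddings). -/
theorem exists_good_extension_nilpotent (c p : ℕ) (hc : 2 ≤ c) (hp2 : 2 ≤ p)
    (hp : p.Prime) (G₀ : Type) [Group G₀] [Finite G₀]
    (hG₀nil : (⊤ : Subgroup G₀).lowerCentralSeries c = ⊥) (hG₀exp : ∀ g : G₀, g ^ p = 1) :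
    ∃ (G₁ : Type) (_ : Group G₁) (_ : Finite G₁),
      (⊤ : Subgroup G₁).lowerCentralSeries c = ⊥ ∧ (∀ g : G₁, g ^ p = 1) ∧
      ∃ f : G₀ →* G₁, Function.Injective f ∧
        ∀ (C : Type) (_ : Group C) (_ : Finite C),
          (⊤ : Subgroup C).lowerCentralSeries c = ⊥ → (∀ g : C, g ^ p = 1) →
          ∀ (ι : G₁ →* C), Function.Injective ι →
            ∀ i ≤ c, ((⊤ : Subgroup G₁).lowerCentralSeries i).comap f =
              ((⊤ : Subgroup C).lowerCentralSeries i).comap (ι.comp f) :=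
  exists_good_extension_nilpotent_general c p G₀ hG₀nil hG₀exp
end

section
/- Let N, N' ⊆ ℕ be recursively inseparable computably enumerable sets (there is no computable set W with N ⊆ W and N' ∩ W = ∅). Let A be an abelian group generated by elements a₁, a₂, … subject to relations a₁ = a_i for i ∈ N and a₂ = a_j for j ∈ N', with a₁ ≠ a₂ in A. Then the set W = {i ∈ ℕ : a_i = a₁ in A} is not computable. -/
theorem miller_set_not_computable_general (N N' : Set ℕ)
    (hinsep : ¬ ∃ W : Set ℕ, ComputablePred (· ∈ W) ∧ N ⊆ W ∧ N' ∩ W = ∅)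
    (A : Type) (a : ℕ → A)
    (h1 : ∀ i ∈ N, a i = a 1) (h2 : ∀ j ∈ N', a j = a 2) (h12 : a 1 ≠ a 2) :
    ¬ ComputablePred (fun i : ℕ => a i = a 1) := by
  intro hW
  have hdisjoint : N' ∩ {i | a i = a 1} = ∅ :=
    Set.eq_empty_iff_forall_notMem.2 fun j ⟨hj, hjW⟩ => h12 (hjW.symm.trans (h2 j hj))
  exact hinsep ⟨{i | a i = a 1}, hW, h1, hdisjoint⟩

/-- Miller's construction: if `N, N'` are recursively inseparable c.e. sets and `A` is
an abelian group generated by elements `a i` with `a i = a 1` for `i ∈ N`,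
`a j = a 2` for `j ∈ N'` and `a 1 ≠ a 2`, then `W = {i : a i = a 1}` is not
computable. -/
theorem miller_set_not_computable (N N' : Set ℕ)
    (hN : REPred (· ∈ N)) (hN' : REPred (· ∈ N'))
    (hinsep : ¬ ∃ W : Set ℕ, ComputablePred (· ∈ W) ∧ N ⊆ W ∧ N' ∩ W = ∅)
    (A : Type) [AddCommGroup A] (a : ℕ → A)
    (hgen : AddSubgroup.closure (Set.range a) = ⊤)
    (h1 : ∀ i ∈ N, a i = a 1) (h2 : ∀ j ∈ N', a j = a 2) (h12 : a 1 ≠ a 2) :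
    ¬ ComputablePred (fun i : ℕ => a i = a 1) :=
  miller_set_not_computable_general N N' hinsep A a h1 h2 h12
end

section
/- Every countable left-orderable group G acts faithfully on (ℚ, <) by order-preserving bijections. -/
/-!
Let `G` act on `G ×ₗ ℚ` by left multiplication on the first coordinate. Left invariance of the
order on `G` makes this an action by order automorphisms, and it is free, hence faithful. Since
`G` is countable, `G ×ₗ ℚ` is a countable dense linear order without endpoints, so by Cantor's
back-and-forth theorem it is order isomorphic to `ℚ`; conjugating by that isomorphism gives the
required action on `ℚ`.
-/

instance Lex.countable {α : Type*} [Countable α] : Countable (Lex α) :=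
  inferInstanceAs (Countable α)

theorem StrictMono.permCongr {α β : Type*} [Preorder α] [Preorder β] {σ : Equiv.Perm α}
    (hσ : StrictMono σ) (e : α ≃o β) : StrictMono (e.toEquiv.permCongr σ) :=
  e.strictMono.comp (hσ.comp e.symm.strictMono)

section LexMulLeft

variable (G β : Type*) [Group G]

def lexMulLeft : G →* Equiv.Perm (G ×ₗ β) where
  toFun g := toLex.symm.trans (((Equiv.mulLeft g).prodCongr (Equiv.refl β)).trans toLex)
  map_one' := by ext; simp
  map_mul' g h := by ext; simp [Prod.map]

variable {G β}

@[simp]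
theorem lexMulLeft_toLex (g : G) (x : G × β) :
    lexMulLeft G β g (toLex x) = toLex (g * x.1, x.2) :=
  rfl

theorem lexMulLeft_injective [Nonempty β] : Function.Injective (lexMulLeft G β) := by
  intro g h hgh
  obtain ⟨b⟩ := ‹Nonempty β›
  simpa using congrArg (fun σ : Equiv.Perm (G ×ₗ β) => (ofLex (σ (toLex (1, b)))).1) hgh

theorem strictMono_lexMulLeft [LinearOrder G] [MulLeftStrictMono G] [Preorder β] (g : G) :
    StrictMono (lexMulLeft G β g) := by
  rintro ⟨x₁, x₂⟩ ⟨y₁, y₂⟩ hxy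
  rcases Prod.Lex.toLex_lt_toLex.mp hxy with h₁ | ⟨rfl, h₂⟩
  · exact Prod.Lex.toLex_lt_toLex.mpr (Or.inl (mul_lt_mul_right h₁ g))
  · exact Prod.Lex.toLex_lt_toLex.mpr (Or.inr ⟨rfl, h₂⟩)

end LexMulLeft

/-- Every countable left-orderable group acts faithfully on `(ℚ, <)` by
order-preserving bijections. -/
theorem countable_left_orderable_acts_on_rat (G : Type) [Group G] [Countable G]
    (hlo : ∃ r : LinearOrder G, ∀ f g h : G, r.lt g h → r.lt (f * g) (f * h)) :
    ∃ φ : G →* Equiv.Perm ℚ, Function.Injective φ ∧ ∀ g : G, StrictMono (φ g) := by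
  obtain ⟨r, hr⟩ := hlo
  let _ : LinearOrder G := r
  have : MulLeftStrictMono G := ⟨fun f _ _ h => hr f _ _ h⟩
  obtain ⟨e⟩ := Order.iso_of_countable_dense (G ×ₗ ℚ) ℚ
  refine ⟨e.toEquiv.permCongrHom.toMonoidHom.comp (lexMulLeft G ℚ), ?_, fun g => ?_⟩
  · exact e.toEquiv.permCongrHom.injective.comp lexMulLeft_injective
  · exact (strictMono_lexMulLeft g).permCongr e
end

section
/- In a Polish space X with a countable basis of clopen sets, if for every Borel set B in a countable family 𝓑 and every nonempty basic clopen A there is a basic clopen A' ⊆ A that decides B (i.e., A'∖B is meagre in A' or A'∩B is meagre in A'), then the set of 𝓑-generic points (points x such that every B ∈ 𝓑 is decided by some basic clopen neighborhood of x) is comeagre in X. -/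
/-- A clopen set `A` *decides* a set `B` if `A \ B` is meagre in `A` or `A ∩ B` is
meagre in `A` (meagreness taken in the subspace `A`). -/
def Decides {X : Type} [TopologicalSpace X] (A B : Set X) : Prop :=
  IsMeagre ((Subtype.val ⁻¹' (A \ B)) : Set A) ∨
    IsMeagre ((Subtype.val ⁻¹' (A ∩ B)) : Set A)

/-!
A Borel set `B` has the Baire property: it differs from an open set `U` by a meagre set. The
frontier of `U` is nowhere dense, so comeagre many points lie in `U` or outside `closure U`, and
each of them has a basic neighbourhood inside `U` (where `B` is comeagre) or disjoint from `U`
(where `B` is meagre). As `𝓑` is countable, a comeagre set of points does this for every `B ∈ 𝓑`.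
-/

open Filter Set Topology TopologicalSpace

variable {X : Type} [TopologicalSpace X]

lemma IsMeagre.preimage_val {A s : Set X} (hA : IsOpen A) (hs : IsMeagre s) :
    IsMeagre ((Subtype.val ⁻¹' s) : Set A) :=
  hs.preimage_of_isOpenMap continuous_subtype_val hA.isOpenMap_subtype_val

lemma Filter.EventuallyEq.isMeagre_diff {s t : Set X} (h : s =ᵇ t) : IsMeagre (s \ t) := by
  filter_upwards [eventuallyEq_set.1 h] with x hx hxst
  exact hxst.2 (hx.1 hxst.1)

lemma BaireMeasurableSet.eventually_exists_decides {𝒜 : Set (Set X)}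
    (h𝒜 : IsTopologicalBasis 𝒜) {B : Set X} (hB : BaireMeasurableSet B) :
    ∀ᶠ x in residual X, ∃ A ∈ 𝒜, x ∈ A ∧ Decides A B := by
  obtain ⟨U, hU, hBU⟩ := hB.residualEq_isOpen
  filter_upwards [coborder_mem_residual hU.isLocallyClosed] with x hx
  rw [coborder_eq_union_closure_compl] at hx
  rcases hx with hxU | hxU
  · obtain ⟨A, hA, hxA, hAU⟩ := h𝒜.exists_subset_of_mem_open hxU hU
    have hAB : IsMeagre (A \ B) := hBU.symm.isMeagre_diff.mono (sdiff_subset_sdiff_left hAU)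
    exact ⟨A, hA, hxA, .inl (hAB.preimage_val (h𝒜.isOpen hA))⟩
  · obtain ⟨A, hA, hxA, hAU⟩ :=
      h𝒜.exists_subset_of_mem_open hxU isClosed_closure.isOpen_compl
    have hsub : A ∩ B ⊆ B \ U := fun _ hy => ⟨hy.2, fun hyU => hAU hy.1 (subset_closure hyU)⟩
    have hAB : IsMeagre (A ∩ B) := hBU.isMeagre_diff.mono hsub
    exact ⟨A, hA, hxA, .inr (hAB.preimage_val (h𝒜.isOpen hA))⟩

theorem generic_points_comeagre_general (X : Type) [TopologicalSpace X]
    [MeasurableSpace X] [BorelSpace X]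
    (𝒜 : Set (Set X))
    (h𝒜basis : TopologicalSpace.IsTopologicalBasis 𝒜)
    (𝓑 : Set (Set X)) (h𝓑count : 𝓑.Countable) (h𝓑borel : ∀ B ∈ 𝓑, MeasurableSet B) :
    {x : X | ∀ B ∈ 𝓑, ∃ A ∈ 𝒜, x ∈ A ∧ Decides A B} ∈ residual X :=
  (eventually_countable_ball h𝓑count).2 fun B hB =>
    (h𝓑borel B hB).baireMeasurableSet.eventually_exists_decides h𝒜basis

/-- In a Polish space with a countable basis of clopen sets `𝒜`, if for every Borel
set `B` in a countable family `𝓑` the basic clopen sets deciding `B` are dense in the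
basis, then the set of `𝓑`-generic points is comeagre. -/
theorem generic_points_comeagre (X : Type) [TopologicalSpace X] [PolishSpace X]
    [MeasurableSpace X] [BorelSpace X]
    (𝒜 : Set (Set X)) (h𝒜count : 𝒜.Countable) (h𝒜clopen : ∀ A ∈ 𝒜, IsClopen A)
    (h𝒜basis : TopologicalSpace.IsTopologicalBasis 𝒜)
    (𝓑 : Set (Set X)) (h𝓑count : 𝓑.Countable) (h𝓑borel : ∀ B ∈ 𝓑, MeasurableSet B)
    (hdense : ∀ B ∈ 𝓑, ∀ A ∈ 𝒜, A.Nonempty → ∃ A' ∈ 𝒜, A' ⊆ A ∧ Decides A' B) :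
    {x : X | ∀ B ∈ 𝓑, ∃ A ∈ 𝒜, x ∈ A ∧ Decides A B} ∈ residual X :=
  generic_points_comeagre_general X 𝒜 h𝒜basis 𝓑 h𝓑count h𝓑borel
end
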